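/- Suppose gcd(m/i, n/j) = t and ν has a generating sequence Q_0 = X, Q_1 = Y, Q_2, … in which every Q_l is an eigenfunction for H_{i,j,t,x}. Let ν̄ be the restriction of ν to the quotient field Q(A_{i,j,t,x}) of A_{i,j,t,x}, and let Γ_ν̄ be the value group of ν̄, i.e. the subgroup of ℚ generated by S^{(A_{i,j,t,x})_𝔫}(ν). If γ_0 = ν(X) ∈ Γ_ν̄, then m = i and t = 1. -/

import Mathlib

/-!
Take `g = (α^i, β^{xj}) ∈ H_{i,j,t,x}` and write `g · Q_l = μ_l Q_l`. Applying `g` to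
`Q_{l+1} = Q_l^{m̄_l} - λ_l X^{c_0} Y^{c_1} ⋯ Q_{l-1}^{c_{l-1}}` and using
`ν(Q_{l+1}) > m̄_l γ_l` gives `μ_l^{m̄_l} = ∏ μ_k^{c_k}`. These relations present the group
generated by the `γ_l`, so `γ_l ↦ μ_l` extends to a character of the value group of `ν`.
By uniqueness of expansions in the generating sequence, the value of an invariant is the value
of a monomial of trivial character; hence the character vanishes on `Γ_ν̄`. So `γ_0 ∈ Γ_ν̄`
forces `α^i = μ_0 = 1`, i.e. `m ∣ i`.
-/

open MvPolynomial Finset Pointwise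

noncomputable section

namespace DuttaPaper

/-- The polynomial ring `K[X,Y]`, with `X = X 0` and `Y = X 1`. -/
abbrev Poly (K : Type) [Field K] : Type := MvPolynomial (Fin 2) K

/-- The rational function field `K(X,Y)`. -/
abbrev RF (K : Type) [Field K] : Type := FractionRing (Poly K)

variable {K : Type} [Field K]

/-- The `K`-algebra endomorphism of `K[X,Y]` sending `X ↦ u • X`, `Y ↦ v • Y`;
this is the action of `(u,v) ∈ 𝕌_m × 𝕌_n` on `K[X,Y]`. -/
def act (u v : K) : Poly K →ₐ[K] Poly K :=
  MvPolynomial.aeval ![MvPolynomial.C u * MvPolynomial.X 0,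
    MvPolynomial.C v * MvPolynomial.X 1]

/-- Membership in the set `H_{i,j,t,x} = {(α^{a i}, β^{b j}) : b ≡ a x (mod t)} ⊆ K × K`. -/
def Hmem (α β : K) (i j t x : ℕ) (p : K × K) : Prop :=
  ∃ a b : ℤ, b ≡ a * (x : ℤ) [ZMOD (t : ℤ)] ∧
    p = (α ^ (a * (i : ℤ)), β ^ (b * (j : ℤ)))

/-- `f ∈ K[X,Y]` is an eigenfunction for `H_{i,j,t,x}`. -/
def IsEigen (α β : K) (i j t x : ℕ) (f : Poly K) : Prop :=
  ∀ p : K × K, Hmem α β i j t x p → ∃ lam : K, act p.1 p.2 f = lam • f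

/-- `f ∈ K[X,Y]` belongs to the invariant ring `A_{i,j,t,x} = K[X,Y]^{H_{i,j,t,x}}`. -/
def Invariant (α β : K) (i j t x : ℕ) (f : Poly K) : Prop :=
  ∀ p : K × K, Hmem α β i j t x p → act p.1 p.2 f = f

/-- A `ℚ`-valued (rational rank 1) valuation on a field `L`: the data of the values of the
nonzero elements (the value of `0` is irrelevant). -/
structure RatVal (L : Type) [Field L] where
  v : L → ℚ
  v_mul : ∀ a b : L, a ≠ 0 → b ≠ 0 → v (a * b) = v a + v b
  v_add : ∀ a b : L, a ≠ 0 → b ≠ 0 → a + b ≠ 0 → min (v a) (v b) ≤ v (a + b)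

/-- Value of a polynomial under a valuation of `K(X,Y)`. -/
def vP (ν : RatVal (RF K)) (f : Poly K) : ℚ :=
  ν.v (algebraMap (Poly K) (RF K) f)

/-- `ν` dominates `R_𝔪 = K[X,Y]_{(X,Y)}` : `ν ≥ 0` on `R_𝔪` and `ν > 0` on its maximal
ideal (expressed on the level of polynomials). -/
def DominatesRm (ν : RatVal (RF K)) : Prop :=
  (∀ f : Poly K, f ≠ 0 → 0 ≤ vP ν f) ∧
  (∀ f : Poly K, f ≠ 0 → MvPolynomial.constantCoeff f = 0 → 0 < vP ν f)

/-- `ν` is non-discrete: its value group is not a cyclic subgroup of `ℚ`. -/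
def Nondiscrete (ν : RatVal (RF K)) : Prop :=
  ¬ ∃ g : ℚ, ∀ z : RF K, z ≠ 0 → ∃ k : ℤ, ν.v z = (k : ℚ) * g

/-- Data of a candidate generating sequence: the polynomials `Q_l` and the numbers `m̄_l`. -/
structure GSData (K : Type) [Field K] where
  Q : ℕ → Poly K
  mbar : ℕ → ℕ

/-- `γ_l = ν(Q_l)`. -/
def GSData.γ (G : GSData K) (ν : RatVal (RF K)) (l : ℕ) : ℚ := vP ν (G.Q l)

/-- `d(l) = m̄_1 ⋯ m̄_{l-1}` (so `d(1) = 1`). -/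
def GSData.d (G : GSData K) (l : ℕ) : ℕ := ∏ k ∈ Finset.Icc 1 (l - 1), G.mbar k

/-- An exponent vector `e` is admissible when `e k < m̄_k` for all `k ≥ 1`. -/
def Adm (G : GSData K) (e : ℕ →₀ ℕ) : Prop := ∀ k, 1 ≤ k → e k < G.mbar k

/-- The monomial `X^{e 0} Q_1^{e 1} Q_2^{e 2} ⋯` in the generating sequence. -/
def Pmon (G : GSData K) (e : ℕ →₀ ℕ) : Poly K := e.prod fun k a => G.Q k ^ a

/-- The value `Σ_k e k • γ_k` of such a monomial. -/
def evalγ (ν : RatVal (RF K)) (G : GSData K) (e : ℕ →₀ ℕ) : ℚ :=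
  e.sum fun k a => (a : ℚ) * G.γ ν k

/-- `(Q_l)_{l≥0}` is a generating sequence for `ν` in `K[X,Y]` (properties (1)–(4) of
Section 2 of the paper, for the algorithm of Cutkosky–Vinh). -/
structure IsGenSeq (ν : RatVal (RF K)) (G : GSData K) : Prop where
  hQ0 : G.Q 0 = MvPolynomial.X 0
  hQ1 : G.Q 1 = MvPolynomial.X 1
  /-- `m̄_l ≥ 1`. -/
  hmbar_pos : ∀ l, 1 ≤ l → 0 < G.mbar l
  /-- `m̄_l γ_l ∈ G(γ_0, …, γ_{l-1})`. -/
  hmbar_mem : ∀ l, 1 ≤ l → ∃ c : ℕ → ℤ,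
      (G.mbar l : ℚ) * G.γ ν l = ∑ k ∈ Finset.range l, (c k : ℚ) * G.γ ν k
  /-- `m̄_l` is minimal with this property. -/
  hmbar_min : ∀ l, 1 ≤ l → ∀ q : ℕ, 0 < q →
      (∃ c : ℕ → ℤ, (q : ℚ) * G.γ ν l = ∑ k ∈ Finset.range l, (c k : ℚ) * G.γ ν k) →
      G.mbar l ≤ q
  /-- (1) `γ_{l+1} > m̄_l γ_l`. -/
  hgrowth : ∀ l, 1 ≤ l → (G.mbar l : ℚ) * G.γ ν l < G.γ ν (l + 1)
  /-- (2) `Q_l = Y^{d(l)} + (terms of lower Y-degree)`. -/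
  hmonic : ∀ l, 1 ≤ l →
      G.Q l - MvPolynomial.X 1 ^ G.d l = 0 ∨
      MvPolynomial.degreeOf 1 (G.Q l - MvPolynomial.X 1 ^ G.d l) < G.d l
  /-- (3), existence and uniqueness of the expansion of any nonzero `f` in terms of the
  admissible monomials `X^{e 0} Q_1^{e 1} ⋯ Q_r^{e r}`, `e k < m̄_k` for `k ≥ 1`. -/
  hexpand : ∀ f : Poly K, f ≠ 0 →
      ∃! c : (ℕ →₀ ℕ) →₀ K,
        (∀ e ∈ c.support, Adm G e) ∧
        f = c.sum fun e a => MvPolynomial.C a * Pmon G e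
  /-- (3), the nonzero terms of the expansion have pairwise distinct values and
  `ν(f)` is the minimum of those values. -/
  hval : ∀ f : Poly K, f ≠ 0 → ∀ c : (ℕ →₀ ℕ) →₀ K,
      (∀ e ∈ c.support, Adm G e) →
      f = (c.sum fun e a => MvPolynomial.C a * Pmon G e) →
      (∀ e ∈ c.support, ∀ e' ∈ c.support, evalγ ν G e = evalγ ν G e' → e = e') ∧
      ∃ e₀ ∈ c.support, vP ν f = evalγ ν G e₀ ∧
        ∀ e ∈ c.support, evalγ ν G e₀ ≤ evalγ ν G e
  /-- (4) `Q_{l+1} = Q_l^{m̄_l} - λ_l X^{c_0} Y^{c_1} Q_2^{c_2} ⋯ Q_{l-1}^{c_{l-1}}` with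
  `0 ≤ c_k < m̄_k` for `k ≥ 1` and `m̄_l γ_l = Σ_{k<l} c_k γ_k`. -/
  hrec : ∀ l, 1 ≤ l → ∃ lam : K, lam ≠ 0 ∧ ∃ cc : ℕ → ℕ,
      (∀ k, 1 ≤ k → k < l → cc k < G.mbar k) ∧
      G.Q (l + 1) =
        G.Q l ^ G.mbar l - MvPolynomial.C lam * ∏ k ∈ Finset.range l, G.Q k ^ cc k ∧
      (G.mbar l : ℚ) * G.γ ν l = ∑ k ∈ Finset.range l, (cc k : ℚ) * G.γ ν k

/-- The valuation semigroup `S^{R_𝔪}(ν) = {ν(h) : 0 ≠ h ∈ R_𝔪}`. -/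
def SRm (ν : RatVal (RF K)) : Set ℚ :=
  {q | ∃ f g : Poly K, f ≠ 0 ∧ MvPolynomial.constantCoeff g ≠ 0 ∧
    q = vP ν f - vP ν g}

/-- The valuation semigroup `S^{(A_{i,j,t,x})_𝔫}(ν)` of the invariant ring localized at
`𝔫 = (X,Y) ∩ A_{i,j,t,x}`. -/
def SA (ν : RatVal (RF K)) (α β : K) (i j t x : ℕ) : Set ℚ :=
  {q | ∃ f g : Poly K, f ≠ 0 ∧ Invariant α β i j t x f ∧ Invariant α β i j t x g ∧
    MvPolynomial.constantCoeff g ≠ 0 ∧ q = vP ν f - vP ν g}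

/-- `S` is a finitely generated module over the subsemigroup `T`:
`S = {s_1, …, s_k} + T` for finitely many `s_i ∈ S`. -/
def FGover (S T : Set ℚ) : Prop :=
  ∃ F : Finset ℚ, (F : Set ℚ) ⊆ S ∧ S = (F : Set ℚ) + T

section Presentation

open Finsupp Submodule

variable {A B : Type*} [AddCommGroup A] [AddCommGroup B]

/-- The paper's `m̄_l`: the order of `γ l` modulo the subgroup generated by `γ 0, …, γ (l-1)`,
with `0` standing for infinite order. -/
def relOrder (γ : ℕ → A) (l : ℕ) : ℕ :=
  addOrderOf (Submodule.Quotient.mk (γ l) : A ⧸ span ℤ (γ '' Set.Iio l))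

theorem relOrder_dvd_iff (γ : ℕ → A) (l : ℕ) (a : ℤ) :
    (relOrder γ l : ℤ) ∣ a ↔ a • γ l ∈ span ℤ (γ '' Set.Iio l) := by
  rw [relOrder, addOrderOf_dvd_iff_zsmul_eq_zero, ← Submodule.Quotient.mk_smul,
    Submodule.Quotient.mk_eq_zero]

theorem mem_span_image_Iio_iff (γ : ℕ → A) (l : ℕ) (a : A) :
    a ∈ span ℤ (γ '' Set.Iio l) ↔ ∃ c : ℕ → ℤ, ∑ k ∈ Finset.range l, c k • γ k = a := by
  constructor
  · rw [mem_span_image_iff_linearCombination]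
    rintro ⟨c, hc, rfl⟩
    refine ⟨c, ?_⟩
    rw [linearCombination_apply]
    refine (sum_of_support_subset c ?_ (fun k a => a • γ k) fun _ _ => zero_smul ℤ _).symm
    rw [← Finset.coe_subset, Finset.coe_range]
    exact (mem_supported ℤ c).1 hc
  · rintro ⟨c, rfl⟩
    exact sum_mem fun k hk =>
      zsmul_mem (subset_span (Set.mem_image_of_mem γ (by simpa using hk))) _

theorem linearCombination_erase_add (ε : ℕ → B) (M : ℕ →₀ ℤ) (l : ℕ) :
    linearCombination ℤ ε M = linearCombination ℤ ε (M.erase l) + M l • ε l := by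
  conv_lhs => rw [← single_add_erase l M]
  rw [map_add, linearCombination_single, add_comm]

theorem linearCombination_mapRange_natCast (ε : ℕ → B) (e : ℕ →₀ ℕ) :
    linearCombination ℤ ε (e.mapRange Nat.cast Nat.cast_zero) = e.sum fun k a => a • ε k := by
  rw [linearCombination_apply, sum_mapRange_index (h := fun k (a : ℤ) => a • ε k)
    fun _ => zero_smul ℤ _]
  simp only [natCast_zsmul]

theorem erase_mem_supported_Iio {M : ℕ →₀ ℤ} {l : ℕ}
    (hM : M ∈ supported ℤ ℤ (Set.Iio (l + 1))) : M.erase l ∈ supported ℤ ℤ (Set.Iio l) := by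
  rw [mem_supported'] at hM ⊢
  intro k hk
  rcases eq_or_ne k l with rfl | hkl
  · exact erase_same
  · rw [erase_ne hkl]
    exact hM k (by simp only [Set.mem_Iio, not_lt] at hk ⊢; omega)

/-- Every `ℤ`-relation among the `γ l` is a consequence of the relations expressing
`relOrder γ l • γ l` through `γ 0, …, γ (l-1)`. -/
theorem ker_linearCombination_le_of_relations (γ : ℕ → A) (δ : ℕ → B)
    (hrel : ∀ l, ∃ c ∈ supported ℤ ℤ (Set.Iio l),
      linearCombination ℤ γ c = (relOrder γ l : ℤ) • γ l ∧
      linearCombination ℤ δ c = (relOrder γ l : ℤ) • δ l) :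
    LinearMap.ker (linearCombination ℤ γ) ≤ LinearMap.ker (linearCombination ℤ δ) := by
  suffices h : ∀ l, ∀ M ∈ supported ℤ ℤ (Set.Iio l),
      linearCombination ℤ γ M = 0 → linearCombination ℤ δ M = 0 by
    intro M hM
    obtain ⟨L, hL⟩ := M.support.exists_nat_subset_range
    exact h L M ((mem_supported ℤ M).2 (by rw [← Finset.coe_range]; exact_mod_cast hL)) hM
  intro l
  induction l with
  | zero =>
    intro M hM _
    have hM0 : M = 0 := Finsupp.ext fun k => (mem_supported' ℤ M).1 hM k (by simp)
    rw [hM0, map_zero]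
  | succ l ih =>
    intro M hM hγM
    obtain ⟨c, hc, hcγ, hcδ⟩ := hrel l
    have hM₀ := erase_mem_supported_Iio hM
    rw [linearCombination_erase_add γ M l] at hγM
    obtain ⟨q, hq⟩ : (relOrder γ l : ℤ) ∣ M l := by
      rw [relOrder_dvd_iff, eq_neg_of_add_eq_zero_right hγM]
      exact neg_mem ((mem_span_image_iff_linearCombination ℤ).2 ⟨_, hM₀, rfl⟩)
    have hred := ih (M.erase l + q • c) (add_mem hM₀ (smul_mem _ q hc)) (by
      rw [map_add, map_smul, hcγ, smul_smul, mul_comm, ← hq, hγM])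
    rw [map_add, map_smul, hcδ, smul_smul, mul_comm, ← hq] at hred
    rw [linearCombination_erase_add δ M l, hred]

end Presentation

theorem _root_.AlgHom.map_prod_pow_of_eigen {R S ι : Type*} [CommSemiring R] [CommSemiring S]
    [Algebra R S] (φ : S →ₐ[R] S) {f : ι → S} {c : ι → R} (h : ∀ k, φ (f k) = c k • f k)
    (s : Finset ι) (e : ι → ℕ) :
    φ (∏ k ∈ s, f k ^ e k) = (∏ k ∈ s, c k ^ e k) • ∏ k ∈ s, f k ^ e k := by
  simp only [map_prod, map_pow, h, smul_pow, Finset.prod_smul]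

lemma act_comp (u v u' v' : K) : (act u v).comp (act u' v') = act (u * u') (v * v') := by
  apply algHom_ext
  intro k
  fin_cases k <;> simp [act, mul_comm, mul_left_comm]

lemma act_one : act (1 : K) 1 = AlgHom.id K (Poly K) := by
  apply algHom_ext
  intro k
  fin_cases k <;> simp [act]

lemma act_injective {u v : K} (hu : u ≠ 0) (hv : v ≠ 0) : Function.Injective (act u v) :=
  Function.LeftInverse.injective (g := act u⁻¹ v⁻¹) fun f => by
    rw [← AlgHom.comp_apply, act_comp, inv_mul_cancel₀ hu, inv_mul_cancel₀ hv, act_one,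
      AlgHom.id_apply]

lemma act_C (u v a : K) : act u v (C a) = C a :=
  (act u v).commutes a

lemma act_X_zero (u v : K) : act u v (X 0) = u • X 0 := by
  simp [act, smul_eq_C_mul]

section Valuation

variable (ν : RatVal (RF K))

lemma vP_mul {f g : Poly K} (hf : f ≠ 0) (hg : g ≠ 0) : vP ν (f * g) = vP ν f + vP ν g := by
  have hinj := IsFractionRing.injective (Poly K) (RF K)
  rw [vP, map_mul]
  exact ν.v_mul _ _ ((map_ne_zero_iff _ hinj).2 hf) ((map_ne_zero_iff _ hinj).2 hg)

lemma vP_one : vP ν (1 : Poly K) = 0 := by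
  have := vP_mul ν (one_ne_zero (α := Poly K)) one_ne_zero
  rw [one_mul] at this
  linarith

lemma vP_pow {f : Poly K} (hf : f ≠ 0) (k : ℕ) : vP ν (f ^ k) = k * vP ν f := by
  induction k with
  | zero => simpa using vP_one ν
  | succ k ih =>
    rw [pow_succ, vP_mul ν (pow_ne_zero _ hf) hf, ih]
    push_cast
    ring

lemma vP_prod {s : Finset ℕ} {f : ℕ → Poly K} (hf : ∀ k ∈ s, f k ≠ 0) :
    vP ν (∏ k ∈ s, f k) = ∑ k ∈ s, vP ν (f k) := by
  classical
  induction s using Finset.induction with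
  | empty => simpa using vP_one ν
  | insert a s ha ih =>
    rw [Finset.prod_insert ha, Finset.sum_insert ha,
      vP_mul ν (hf a (Finset.mem_insert_self _ _))
        (Finset.prod_ne_zero_iff.2 fun b hb => hf b (Finset.mem_insert_of_mem hb)),
      ih fun b hb => hf b (Finset.mem_insert_of_mem hb)]

variable {ν}

/-- Nonzero constants are units of `R_𝔪`, so domination forces their value to be `0`. -/
lemma vP_C (hdom : DominatesRm ν) {a : K} (ha : a ≠ 0) : vP ν (C a) = 0 := by
  have hCa : (C a : Poly K) ≠ 0 := by simpa using ha
  have hCa' : (C a⁻¹ : Poly K) ≠ 0 := by simpa using ha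
  have h := vP_mul ν hCa hCa'
  rw [← map_mul, mul_inv_cancel₀ ha, map_one, vP_one] at h
  linarith [hdom.1 _ hCa, hdom.1 _ hCa']

lemma vP_smul (hdom : DominatesRm ν) {a : K} (ha : a ≠ 0) {f : Poly K} (hf : f ≠ 0) :
    vP ν (a • f) = vP ν f := by
  rw [smul_eq_C_mul, vP_mul ν (by simpa using ha) hf, vP_C hdom ha, zero_add]

/-- `(w - s) • (A - B) = (s - p) • B`, and the two sides have different values unless both
vanish. -/
lemma eq_of_smul_sub_of_vP_lt (hdom : DominatesRm ν) {w s p : K} {A B : Poly K}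
    (hB : B ≠ 0) (hAB : A - B ≠ 0) (hact : w • (A - B) = s • A - p • B)
    (hv : vP ν B < vP ν (A - B)) : s = p := by
  have key : (w - s) • (A - B) = (s - p) • B := by
    rw [sub_smul, hact, sub_smul, smul_sub]
    abel
  by_contra hsp
  have hsp' : s - p ≠ 0 := sub_ne_zero.2 hsp
  have hws : w - s ≠ 0 := by
    rintro h
    rw [h, zero_smul] at key
    exact smul_ne_zero hsp' hB key.symm
  have := congrArg (vP ν) key
  rw [vP_smul hdom hws hAB, vP_smul hdom hsp' hB] at this
  linarith

end Valuation

namespace IsGenSeq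

variable {ν : RatVal (RF K)} {G : GSData K}

lemma Q_ne_zero (hG : IsGenSeq ν G) (l : ℕ) : G.Q l ≠ 0 := by
  rcases Nat.eq_zero_or_pos l with rfl | hl
  · rw [hG.hQ0]
    exact X_ne_zero 0
  intro h0
  rcases hG.hmonic l hl with h | h <;> rw [h0, zero_sub] at h
  · exact pow_ne_zero _ (X_ne_zero 1) (neg_eq_zero.1 h)
  · rw [degreeOf_neg, degreeOf_X_self_pow] at h
    exact lt_irrefl _ h

lemma γ_zero_pos (hG : IsGenSeq ν G) (hdom : DominatesRm ν) : 0 < G.γ ν 0 := by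
  rw [GSData.γ, hG.hQ0]
  exact hdom.2 _ (X_ne_zero 0) (by simp)

lemma relOrder_eq_mbar (hG : IsGenSeq ν G) {l : ℕ} (hl : 1 ≤ l) :
    relOrder (G.γ ν) l = G.mbar l := by
  have hspan : ∀ q : ℕ, (q : ℤ) • G.γ ν l ∈ Submodule.span ℤ (G.γ ν '' Set.Iio l) ↔
      ∃ c : ℕ → ℤ, (q : ℚ) * G.γ ν l = ∑ k ∈ Finset.range l, (c k : ℚ) * G.γ ν k := by
    intro q
    simp only [mem_span_image_Iio_iff, zsmul_eq_mul, Int.cast_natCast, eq_comm]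
  rw [relOrder, addOrderOf_eq_iff (hG.hmbar_pos l hl)]
  refine ⟨?_, fun q hq hq0 hzero => ?_⟩
  · rw [← natCast_zsmul, ← Submodule.Quotient.mk_smul, Submodule.Quotient.mk_eq_zero, hspan]
    exact hG.hmbar_mem l hl
  · rw [← natCast_zsmul, ← Submodule.Quotient.mk_smul, Submodule.Quotient.mk_eq_zero,
      hspan] at hzero
    exact absurd (hG.hmbar_min l hl q hq0 hzero) (not_le.2 hq)

lemma relOrder_zero (hG : IsGenSeq ν G) (hdom : DominatesRm ν) :
    relOrder (G.γ ν) 0 = 0 := by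
  rw [relOrder, addOrderOf_eq_zero_iff']
  intro q hq hzero
  rw [← natCast_zsmul, ← Submodule.Quotient.mk_smul, Submodule.Quotient.mk_eq_zero,
    mem_span_image_Iio_iff] at hzero
  obtain ⟨c, hc⟩ := hzero
  rw [Finset.sum_range_zero, zsmul_eq_mul, Int.cast_natCast] at hc
  exact (mul_pos (Nat.cast_pos.2 hq) (hG.γ_zero_pos hdom)).ne' hc.symm

variable {u v : K} {μ : ℕ → Kˣ}

lemma exists_eigenvalues (hG : IsGenSeq ν G) (hu : u ≠ 0) (hv : v ≠ 0)
    (heig : ∀ l, ∃ lam : K, act u v (G.Q l) = lam • G.Q l) :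
    ∃ μ : ℕ → Kˣ, ∀ l, act u v (G.Q l) = (μ l : K) • G.Q l := by
  choose lam hlam using heig
  have hne : ∀ l, lam l ≠ 0 := fun l h0 => hG.Q_ne_zero l <| act_injective hu hv <| by
    rw [hlam l, h0, zero_smul, map_zero]
  exact ⟨fun l => Units.mk0 (lam l) (hne l), hlam⟩

/-- Applying the action to `Q_{l+1} = Q_l^{m̄_l} - λ_l ∏ Q_k^{c_k}`: since
`ν(Q_{l+1}) > m̄_l γ_l`, the two terms on the right must have the same eigenvalue. -/
lemma eigenvalue_pow_mbar (hG : IsGenSeq ν G) (hdom : DominatesRm ν)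
    (hμ : ∀ l, act u v (G.Q l) = (μ l : K) • G.Q l) {l : ℕ} (hl : 1 ≤ l) {lam : K}
    (hlam : lam ≠ 0) {cc : ℕ → ℕ}
    (hQ : G.Q (l + 1) = G.Q l ^ G.mbar l - C lam * ∏ k ∈ Finset.range l, G.Q k ^ cc k)
    (hcc : (G.mbar l : ℚ) * G.γ ν l = ∑ k ∈ Finset.range l, (cc k : ℚ) * G.γ ν k) :
    μ l ^ G.mbar l = ∏ k ∈ Finset.range l, μ k ^ cc k := by
  have hP : ∏ k ∈ Finset.range l, G.Q k ^ cc k ≠ 0 :=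
    Finset.prod_ne_zero_iff.2 fun k _ => pow_ne_zero _ (hG.Q_ne_zero k)
  have hB : C lam * ∏ k ∈ Finset.range l, G.Q k ^ cc k ≠ 0 :=
    mul_ne_zero (by simpa using hlam) hP
  have hactA : act u v (G.Q l ^ G.mbar l) = (μ l : K) ^ G.mbar l • G.Q l ^ G.mbar l := by
    rw [map_pow, hμ, smul_pow]
  have hactP := (act u v).map_prod_pow_of_eigen hμ (Finset.range l) cc
  apply Units.ext
  push_cast
  refine eq_of_smul_sub_of_vP_lt (w := μ (l + 1)) hdom hB (hQ ▸ hG.Q_ne_zero (l + 1)) ?_ ?_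
  · rw [← hQ, ← hμ, hQ, map_sub, hactA, map_mul, hactP, act_C, mul_smul_comm]
  · rw [← hQ, vP_mul ν (by simpa using hlam) hP, vP_C hdom hlam, zero_add,
      vP_prod ν fun k _ => pow_ne_zero _ (hG.Q_ne_zero k)]
    simp only [vP_pow ν (hG.Q_ne_zero _)]
    exact hcc ▸ hG.hgrowth l hl

lemma ker_linearCombination_le (hG : IsGenSeq ν G) (hdom : DominatesRm ν)
    (hμ : ∀ l, act u v (G.Q l) = (μ l : K) • G.Q l) :
    LinearMap.ker (Finsupp.linearCombination ℤ (G.γ ν)) ≤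
      LinearMap.ker (Finsupp.linearCombination ℤ fun k => Additive.ofMul (μ k)) := by
  refine ker_linearCombination_le_of_relations _ _ fun l => ?_
  rcases Nat.eq_zero_or_pos l with rfl | hl
  · exact ⟨0, zero_mem _, by simp [hG.relOrder_zero hdom]⟩
  obtain ⟨lam, hlam, cc, -, hQ, hcc⟩ := hG.hrec l hl
  refine ⟨∑ k ∈ Finset.range l, Finsupp.single k (cc k : ℤ),
    sum_mem fun k hk => Finsupp.single_mem_supported ℤ _ (by simpa using hk), ?_, ?_⟩ <;>
    simp only [map_sum, Finsupp.linearCombination_single, hG.relOrder_eq_mbar hl, natCast_zsmul]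
  · simpa only [nsmul_eq_mul, eq_comm] using hcc
  · rw [← ofMul_pow, hG.eigenvalue_pow_mbar hdom hμ hl hlam hQ hcc, ofMul_prod]
    simp only [ofMul_pow]

lemma act_Pmon (hμ : ∀ l, act u v (G.Q l) = (μ l : K) • G.Q l) (e : ℕ →₀ ℕ) :
    act u v (Pmon G e) = ((e.prod fun k a => μ k ^ a : Kˣ) : K) • Pmon G e := by
  rw [Pmon, Finsupp.prod, Finsupp.prod, (act u v).map_prod_pow_of_eigen hμ]
  push_cast
  rfl

/-- By uniqueness of the expansion, an invariant `f` has only monomials of trivial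
eigenvalue, in particular the one realising `ν f`. -/
lemma exists_vP_eq_evalγ_of_invariant (hG : IsGenSeq ν G)
    (hμ : ∀ l, act u v (G.Q l) = (μ l : K) • G.Q l) {f : Poly K} (hf : f ≠ 0)
    (hfix : act u v f = f) :
    ∃ e : ℕ →₀ ℕ, vP ν f = evalγ ν G e ∧ (e.prod fun k a => μ k ^ a) = 1 := by
  classical
  obtain ⟨c, ⟨hcadm, hcsum⟩, hcuniq⟩ := hG.hexpand f hf
  let χ : (ℕ →₀ ℕ) → K := fun e => ((e.prod fun k a => μ k ^ a : Kˣ) : K)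
  let c' : (ℕ →₀ ℕ) →₀ K := Finsupp.onFinset c.support (fun e => χ e * c e)
    fun e h => Finsupp.mem_support_iff.2 fun h0 => h (by rw [h0, mul_zero])
  have hsupp : c'.support ⊆ c.support := Finsupp.support_onFinset_subset
  have hc' : c' = c := by
    refine hcuniq c' ⟨fun e he => hcadm e (hsupp he), ?_⟩
    rw [Finsupp.sum_of_support_subset c' hsupp _ fun e _ => by rw [map_zero, zero_mul]]
    conv_lhs => rw [← hfix, hcsum]
    rw [Finsupp.sum, map_sum]
    refine Finset.sum_congr rfl fun e _ => ?_
    rw [map_mul, act_Pmon hμ, act_C, Finsupp.onFinset_apply, smul_eq_C_mul, map_mul]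
    ring
  obtain ⟨-, e₀, he₀, hv₀, -⟩ := hG.hval f hf c hcadm hcsum
  refine ⟨e₀, hv₀, Units.ext ?_⟩
  have h : χ e₀ * c e₀ = 1 * c e₀ := (DFunLike.congr_fun hc' e₀).trans (one_mul _).symm
  exact mul_right_cancel₀ (Finsupp.mem_support_iff.1 he₀) h

lemma vP_mem_map_ker_of_invariant (hG : IsGenSeq ν G)
    (hμ : ∀ l, act u v (G.Q l) = (μ l : K) • G.Q l) {f : Poly K} (hf : f ≠ 0)
    (hfix : act u v f = f) :
    vP ν f ∈ (LinearMap.ker (Finsupp.linearCombination ℤ fun k => Additive.ofMul (μ k))).map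
      (Finsupp.linearCombination ℤ (G.γ ν)) := by
  obtain ⟨e, hv, hχ⟩ := hG.exists_vP_eq_evalγ_of_invariant hμ hf hfix
  refine ⟨e.mapRange Nat.cast Nat.cast_zero, ?_, ?_⟩
  · rw [SetLike.mem_coe, LinearMap.mem_ker, linearCombination_mapRange_natCast]
    simp only [← ofMul_pow]
    rw [Finsupp.sum, ← ofMul_prod]
    exact congrArg Additive.ofMul hχ
  · rw [linearCombination_mapRange_natCast, hv, evalγ]
    simp only [nsmul_eq_mul]

lemma closure_SA_le {α β : K} {i j t x : ℕ} (hG : IsGenSeq ν G)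
    (hμ : ∀ l, act u v (G.Q l) = (μ l : K) • G.Q l) (hH : Hmem α β i j t x (u, v)) :
    AddSubgroup.closure (SA ν α β i j t x) ≤
      ((LinearMap.ker (Finsupp.linearCombination ℤ fun k => Additive.ofMul (μ k))).map
        (Finsupp.linearCombination ℤ (G.γ ν))).toAddSubgroup := by
  rw [AddSubgroup.closure_le]
  rintro q ⟨f, g, hf, hfinv, hginv, hg0, rfl⟩
  have hg : g ≠ 0 := fun h => hg0 (by rw [h, map_zero])
  exact sub_mem (hG.vP_mem_map_ker_of_invariant hμ hf (hfinv (u, v) hH))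
    (hG.vP_mem_map_ker_of_invariant hμ hg (hginv (u, v) hH))

lemma eigenvalue_zero_eq_one (hG : IsGenSeq ν G) (hdom : DominatesRm ν)
    (hμ : ∀ l, act u v (G.Q l) = (μ l : K) • G.Q l)
    (h0 : G.γ ν 0 ∈ (LinearMap.ker (Finsupp.linearCombination ℤ fun k => Additive.ofMul (μ k))).map
      (Finsupp.linearCombination ℤ (G.γ ν))) :
    μ 0 = 1 := by
  obtain ⟨M, hMδ, hMγ⟩ := h0
  have hrel : Finsupp.single 0 1 - M ∈ LinearMap.ker (Finsupp.linearCombination ℤ (G.γ ν)) := by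
    rw [LinearMap.mem_ker, map_sub, hMγ, Finsupp.linearCombination_single, one_smul, sub_self]
  have h := hG.ker_linearCombination_le hdom hμ hrel
  rw [LinearMap.mem_ker, map_sub, hMδ, sub_zero, Finsupp.linearCombination_single,
    one_smul] at h
  exact ofMul_eq_zero.1 h

end IsGenSeq

theorem stmt_18_general (K : Type) [Field K]
    (m n : ℕ) (hm : 0 < m) (hn : 0 < n) (α β : K)
    (hα : IsPrimitiveRoot α m) (hβ : IsPrimitiveRoot β n)
    (i j t x : ℕ)
    (him : i ∣ m) (hti : t ∣ m / i)
    (ν : RatVal (RF K)) (hdom : DominatesRm ν)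
    (G : GSData K) (hG : IsGenSeq ν G)
    (heig : ∀ l, IsEigen α β i j t x (G.Q l))
    (hmem : G.γ ν 0 ∈ AddSubgroup.closure (SA ν α β i j t x)) :
    m = i ∧ t = 1 := by
  have hH : Hmem α β i j t x (α ^ i, β ^ (x * j)) :=
    ⟨1, x, by rw [one_mul], by rw [one_mul, zpow_natCast, ← Nat.cast_mul, zpow_natCast]⟩
  obtain ⟨μ, hμ⟩ := hG.exists_eigenvalues (u := α ^ i) (v := β ^ (x * j))
    (pow_ne_zero _ (hα.ne_zero hm.ne'))
    (pow_ne_zero _ (hβ.ne_zero hn.ne')) fun l => heig l (α ^ i, β ^ (x * j)) hH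
  have hμ0 := hG.eigenvalue_zero_eq_one hdom hμ (hG.closure_SA_le hμ hH hmem)
  have hu : α ^ i = 1 := by
    have h := hμ 0
    rw [hG.hQ0, act_X_zero, hμ0, Units.val_one] at h
    exact smul_left_injective K (X_ne_zero 0) h
  have hmi : m = i := Nat.dvd_antisymm (hα.dvd_of_pow_eq_one i hu) him
  refine ⟨hmi, Nat.dvd_one.1 ?_⟩
  rwa [← hmi, Nat.div_self hm] at hti

/-- if `γ_0 = ν(X)` lies in the value group of `ν̄` (the subgroup of `ℚ`
generated by the invariant valuation semigroup), then `m = i` and `t = 1`. -/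
theorem stmt_18 (K : Type) [Field K] [IsAlgClosed K] [CharZero K]
    (m n : ℕ) (hm : 0 < m) (hn : 0 < n) (α β : K)
    (hα : IsPrimitiveRoot α m) (hβ : IsPrimitiveRoot β n)
    (i j t x : ℕ) (hi : 0 < i) (hj : 0 < j) (ht : 0 < t)
    (him : i ∣ m) (hjn : j ∣ n) (hti : t ∣ m / i) (htj : t ∣ n / j)
    (hxt : Nat.gcd x t = 1) (hx1 : 1 ≤ x) (hxle : x ≤ t)
    (ν : RatVal (RF K)) (hdom : DominatesRm ν) (hnd : Nondiscrete ν)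
    (G : GSData K) (hG : IsGenSeq ν G)
    (heig : ∀ l, IsEigen α β i j t x (G.Q l))
    (hgcd : Nat.gcd (m / i) (n / j) = t)
    (hmem : G.γ ν 0 ∈ AddSubgroup.closure (SA ν α β i j t x)) :
    m = i ∧ t = 1 :=
  stmt_18_general K m n hm hn α β hα hβ i j t x him hti ν hdom G hG heig hmem

end DuttaPaper
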